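/- arXiv:2401.03338 — 3 statements merged into one kernel-verified Lean document; each statement's English description precedes it below -/
import Mathlib

section
/- There exists a constant C > 0, depending only on sup_{t∈[0,T]} |σ'(t)|, such that for every 0 < δ ≤ T, the parabola approximation β on [0, δ] satisfies ‖∫₀^δ σ(u)·β'(u) du − (δ/2)·(σ(0)·A₋ + σ(δ)·A₊)‖_{L²} ≤ C·δ^{3/2}. -/
/-!
Since `β'` is affine, `β'(u) = (1 - u/δ) A₋ + (u/δ) A₊`, and both weights integrate to `δ/2` over
`[0, δ]`. So the error is `A₋ ∫ (1 - u/δ)(σ u - σ 0) du + A₊ ∫ (u/δ)(σ u - σ δ) du`, and each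
integral is at most `M δ²` because `σ` is `M`-Lipschitz on `[0, T]`. Finally
`A₋² + A₊² = 2 (B_δ² + 6 I_δ²) / δ²` has expectation `8 / δ`, so the mean square error is at
most `16 M² δ³`.
-/

open MeasureTheory ProbabilityTheory Real

noncomputable section

/-- The parabola approximation of Brownian motion on `[0, δ]` with coefficients `b` and `i`:
`β(u) = b·(u/δ) + √6·i·(u/δ)·((u/δ) − 1)`. -/
def parabola (δ b i u : ℝ) : ℝ := b * (u / δ) + Real.sqrt 6 * i * (u / δ) * (u / δ - 1)

open Set

section Deterministic

variable {δ : ℝ}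

lemma deriv_parabola (hδ : δ ≠ 0) (b i u : ℝ) :
    deriv (parabola δ b i) u
      = (1 - u / δ) * ((b - √6 * i) / δ) + u / δ * ((b + √6 * i) / δ) := by
  have hu : HasDerivAt (fun u : ℝ => u / δ) (1 / δ) u := (hasDerivAt_id u).div_const δ
  have h : HasDerivAt (parabola δ b i) _ u :=
    (hu.const_mul b).add ((hu.const_mul (√6 * i)).mul (hu.sub_const 1))
  rw [h.deriv]
  field_simp
  ring

lemma deriv_parabola_zero (hδ : δ ≠ 0) (b i : ℝ) :
    deriv (parabola δ b i) 0 = (b - √6 * i) / δ := by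
  simp [deriv_parabola hδ]

lemma deriv_parabola_self (hδ : δ ≠ 0) (b i : ℝ) :
    deriv (parabola δ b i) δ = (b + √6 * i) / δ := by
  simp [deriv_parabola hδ, hδ]

lemma integral_linear_interpolation (hδ : δ ≠ 0) (c d : ℝ) :
    ∫ u in (0:ℝ)..δ, (1 - u / δ) * c + u / δ * d = δ / 2 * (c + d) := by
  have h1 : ∫ u in (0:ℝ)..δ, u / δ = δ / 2 := by
    rw [intervalIntegral.integral_div, integral_id]
    field_simp
    ring
  have h2 : ∫ u in (0:ℝ)..δ, (1 - u / δ) = δ / 2 := by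
    rw [intervalIntegral.integral_sub intervalIntegrable_const
      (intervalIntegral.intervalIntegrable_id.div_const δ), h1, intervalIntegral.integral_const]
    simp only [sub_zero, smul_eq_mul, mul_one]
    ring
  rw [intervalIntegral.integral_add ((by fun_prop : Continuous _).intervalIntegrable _ _)
    ((by fun_prop : Continuous _).intervalIntegrable _ _), intervalIntegral.integral_mul_const,
    intervalIntegral.integral_mul_const, h1, h2]
  ring

lemma integral_mul_linear_interpolation_sub_trapezoid {f : ℝ → ℝ} (hδ : δ ≠ 0)
    (hf : IntervalIntegrable f volume 0 δ) (a b : ℝ) :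
    (∫ u in 0..δ, f u * ((1 - u / δ) * a + u / δ * b)) - δ / 2 * (f 0 * a + f δ * b)
      = a * (∫ u in 0..δ, (1 - u / δ) * (f u - f 0))
        + b * ∫ u in 0..δ, u / δ * (f u - f δ) := by
  have hcont {g : ℝ → ℝ} (hg : Continuous g) : ContinuousOn g (uIcc 0 δ) := hg.continuousOn
  rw [← integral_linear_interpolation hδ, ← intervalIntegral.integral_const_mul,
    ← intervalIntegral.integral_const_mul, ← intervalIntegral.integral_sub,
    ← intervalIntegral.integral_add]
  · congr 1
    ext u
    ring
  · exact ((hf.sub intervalIntegrable_const).continuousOn_mul (hcont (by fun_prop))).const_mul a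
  · exact ((hf.sub intervalIntegrable_const).continuousOn_mul (hcont (by fun_prop))).const_mul b
  · exact hf.mul_continuousOn (hcont (by fun_prop))
  · exact (by fun_prop : Continuous _).intervalIntegrable _ _

lemma abs_integral_mul_sub_le_of_lipschitzOnWith {K : NNReal} {f w : ℝ → ℝ} (hδ : 0 ≤ δ)
    (hf : LipschitzOnWith K f (Icc 0 δ)) (hw : ∀ u ∈ Icc 0 δ, |w u| ≤ 1) {x : ℝ}
    (hx : x ∈ Icc 0 δ) :
    |∫ u in 0..δ, w u * (f u - f x)| ≤ K * δ ^ 2 := by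
  have := intervalIntegral.norm_integral_le_of_norm_le_const (a := 0) (b := δ) (C := K * δ)
    (f := fun u => w u * (f u - f x)) fun u hu => by
      have hu' : u ∈ Icc 0 δ := Ioc_subset_Icc_self (uIoc_of_le hδ ▸ hu)
      have hfu : |f u - f x| ≤ K * δ := by
        have := (hf.dist_le_mul u hu' x hx).trans
          (mul_le_mul_of_nonneg_left (Real.dist_le_of_mem_Icc hu' hx) K.2)
        rwa [Real.dist_eq, sub_zero] at this
      rw [Real.norm_eq_abs, abs_mul]
      nlinarith [hw u hu', abs_nonneg (w u), abs_nonneg (f u - f x)]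
  simpa [abs_of_nonneg hδ, sq, mul_assoc] using this

lemma abs_integral_mul_linear_interpolation_sub_trapezoid_le {K : NNReal} {f : ℝ → ℝ}
    (hδ : 0 < δ) (hf : LipschitzOnWith K f (Icc 0 δ)) (a b : ℝ) :
    |(∫ u in 0..δ, f u * ((1 - u / δ) * a + u / δ * b)) - δ / 2 * (f 0 * a + f δ * b)|
      ≤ K * δ ^ 2 * (|a| + |b|) := by
  have hunit : ∀ u ∈ Icc 0 δ, 0 ≤ u / δ ∧ u / δ ≤ 1 := fun u hu =>
    ⟨div_nonneg hu.1 hδ.le, (div_le_one hδ).2 hu.2⟩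
  have hw0 : ∀ u ∈ Icc 0 δ, |1 - u / δ| ≤ 1 := fun u hu =>
    abs_le.2 ⟨by linarith [hunit u hu], by linarith [hunit u hu]⟩
  have hwδ : ∀ u ∈ Icc 0 δ, |u / δ| ≤ 1 := fun u hu =>
    abs_le.2 ⟨by linarith [hunit u hu], (hunit u hu).2⟩
  rw [integral_mul_linear_interpolation_sub_trapezoid hδ.ne'
    (hf.continuousOn.intervalIntegrable_of_Icc hδ.le)]
  calc _ ≤ |a| * (K * δ ^ 2) + |b| * (K * δ ^ 2) := by
        refine (abs_add_le _ _).trans ?_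
        rw [abs_mul, abs_mul]
        gcongr
        · exact abs_integral_mul_sub_le_of_lipschitzOnWith hδ.le hf hw0 (left_mem_Icc.2 hδ.le)
        · exact abs_integral_mul_sub_le_of_lipschitzOnWith hδ.le hf hwδ (right_mem_Icc.2 hδ.le)
    _ = K * δ ^ 2 * (|a| + |b|) := by ring

lemma sq_integral_mul_deriv_parabola_sub_trapezoid_le {K : NNReal} {f : ℝ → ℝ} (hδ : 0 < δ)
    (hf : LipschitzOnWith K f (Icc 0 δ)) (b i : ℝ) :
    ((∫ u in 0..δ, f u * deriv (parabola δ b i) u) -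
        δ / 2 * (f 0 * deriv (parabola δ b i) 0 + f δ * deriv (parabola δ b i) δ)) ^ 2
      ≤ 4 * K ^ 2 * δ ^ 2 * (b ^ 2 + 6 * i ^ 2) := by
  rw [deriv_parabola_zero hδ.ne', deriv_parabola_self hδ.ne']
  simp only [deriv_parabola hδ.ne']
  set a := (b - √6 * i) / δ
  set c := (b + √6 * i) / δ
  have hsum : a ^ 2 + c ^ 2 = 2 * (b ^ 2 + 6 * i ^ 2) / δ ^ 2 := by
    rw [div_pow, div_pow, ← add_div]
    congr 1
    linear_combination 2 * i ^ 2 * Real.sq_sqrt (by norm_num : (0:ℝ) ≤ 6)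
  calc _ = |_| ^ 2 := (sq_abs _).symm
    _ ≤ (K * δ ^ 2 * (|a| + |c|)) ^ 2 :=
        pow_le_pow_left₀ (abs_nonneg _)
          (abs_integral_mul_linear_interpolation_sub_trapezoid_le hδ hf a c) 2
    _ ≤ K ^ 2 * δ ^ 4 * (2 * (a ^ 2 + c ^ 2)) := by
        rw [mul_pow, mul_pow, ← pow_mul]
        gcongr
        nlinarith [sq_nonneg (|a| - |c|), sq_abs a, sq_abs c]
    _ = 4 * K ^ 2 * δ ^ 2 * (b ^ 2 + 6 * i ^ 2) := by
        rw [hsum]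
        field_simp
        ring

end Deterministic

section Gaussian

variable {Ω : Type*} {mΩ : MeasurableSpace Ω} {P : Measure Ω} {X : Ω → ℝ} {v : NNReal}

lemma integral_sq_of_map_eq_gaussianReal (hX : Measurable X) (h : P.map X = gaussianReal 0 v) :
    ∫ ω, X ω ^ 2 ∂P = v := by
  rw [← integral_map hX.aemeasurable (by fun_prop) (f := fun x : ℝ => x ^ 2), h,
    ← variance_of_integral_eq_zero aemeasurable_id' integral_id_gaussianReal,
    variance_fun_id_gaussianReal]

lemma integrable_sq_of_map_eq_gaussianReal (hX : Measurable X)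
    (h : P.map X = gaussianReal 0 v) : Integrable (fun ω => X ω ^ 2) P := by
  have := (memLp_id_gaussianReal (μ := 0) (v := v) 2).integrable_sq
  rw [← h] at this
  exact (integrable_map_measure (by fun_prop) hX.aemeasurable).mp this

end Gaussian

lemma sqrt_sq_mul_pow_three {c x : ℝ} (hc : 0 ≤ c) (hx : 0 ≤ x) :
    √(c ^ 2 * x ^ 3) = c * x ^ ((3 : ℝ) / 2) := by
  rw [Real.sqrt_mul (by positivity), Real.sqrt_sq hc, Real.sqrt_eq_rpow, ← Real.rpow_natCast,
    ← Real.rpow_mul hx]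
  norm_num

/-- `L²`-expansion of the Wiener-type integral against the parabola approximation:
there is a constant `C > 0`, depending only on the uniform bound `M` on `|σ'|` over `[0, T]`,
such that for every `0 < δ ≤ T`,
`‖∫₀^δ σ(u)·β'(u) du − (δ/2)·(σ(0)·A₋ + σ(δ)·A₊)‖_{L²} ≤ C·δ^{3/2}`,
where `A₋ = β'(0)` and `A₊ = β'(δ)`. -/
theorem parabola_wiener_integral_expansion (M : ℝ) (hM : 0 ≤ M) :
    ∃ C : ℝ, 0 < C ∧
      ∀ (T : ℝ), 0 < T → ∀ σ : ℝ → ℝ, ContDiffOn ℝ 1 σ (Set.Icc 0 T) →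
      (∀ t ∈ Set.Icc (0:ℝ) T, |derivWithin σ (Set.Icc 0 T) t| ≤ M) →
      ∀ δ : ℝ, 0 < δ → δ ≤ T →
      ∀ (Ω : Type) (_ : MeasurableSpace Ω) (P : Measure Ω) (_ : IsProbabilityMeasure P)
        (Bδ Iδ : Ω → ℝ), Measurable Bδ → Measurable Iδ →
        Measure.map Bδ P = gaussianReal 0 δ.toNNReal →
        Measure.map Iδ P = gaussianReal 0 (δ / 2).toNNReal →
        IndepFun Bδ Iδ P →
        Real.sqrt (∫ ω, ((∫ u in (0:ℝ)..δ, σ u * deriv (parabola δ (Bδ ω) (Iδ ω)) u) -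
            δ / 2 * (σ 0 * deriv (parabola δ (Bδ ω) (Iδ ω)) 0 +
              σ δ * deriv (parabola δ (Bδ ω) (Iδ ω)) δ)) ^ 2 ∂P)
          ≤ C * δ ^ ((3:ℝ)/2) := by
  lift M to NNReal using hM
  refine ⟨4 * M + 1, by positivity, ?_⟩
  intro T _ σ hσ hσM δ hδ hδT Ω _ P _ B I hB hI hBlaw hIlaw _
  have hlip : LipschitzOnWith M σ (Icc 0 δ) :=
    ((convex_Icc 0 T).lipschitzOnWith_of_nnnorm_derivWithin_le (hσ.differentiableOn one_ne_zero)
      fun t ht => by rw [← NNReal.coe_le_coe, coe_nnnorm]; exact hσM t ht).mono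
      (Icc_subset_Icc_right hδT)
  have hB2 := integrable_sq_of_map_eq_gaussianReal hB hBlaw
  have hI2 := (integrable_sq_of_map_eq_gaussianReal hI hIlaw).const_mul 6
  have hmoment : ∫ ω, B ω ^ 2 + 6 * I ω ^ 2 ∂P = 4 * δ := by
    rw [integral_add hB2 hI2, integral_const_mul, integral_sq_of_map_eq_gaussianReal hB hBlaw,
      integral_sq_of_map_eq_gaussianReal hI hIlaw, Real.coe_toNNReal _ hδ.le,
      Real.coe_toNNReal _ (by positivity)]
    ring
  calc _ ≤ √(∫ ω, 4 * M ^ 2 * δ ^ 2 * (B ω ^ 2 + 6 * I ω ^ 2) ∂P) :=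
        Real.sqrt_le_sqrt <| integral_mono_of_nonneg (ae_of_all _ fun ω => sq_nonneg _)
          ((hB2.add hI2).const_mul _) (ae_of_all _ fun ω =>
            sq_integral_mul_deriv_parabola_sub_trapezoid_le hδ hlip (B ω) (I ω))
    _ = 4 * M * δ ^ ((3:ℝ)/2) := by
        rw [integral_const_mul, hmoment, ← sqrt_sq_mul_pow_three (by positivity) hδ.le]
        ring_nf
    _ ≤ (4 * M + 1) * δ ^ ((3:ℝ)/2) := by gcongr; linarith
end
end

section
/- For every δ > 0, the Kalman gain K(δ) = Q(δ)·H₁ᵀ·(H₁·Q(δ)·H₁ᵀ)⁻¹ ∈ ℝ² built from predictive covariance Q(δ), observation row H₁, and zero measurement noise has second component exactly equal to 1, i.e. K(δ)₁ = 1; moreover there exists C > 0, depending only on θ, such that |K(δ)₀ − δ/2| ≤ C·δ³ for all 0 < δ ≤ 1. -/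
/-
Since `F² = -θF`, the matrix exponential is `exp (sF) = 1 + g(s) F` with `g(s) = ∫₀ˢ e^{-θu} du`.
The second column of `Q(δ)` is then `η² (g(δ)²/2, g₂(δ))`, where `g₂(δ) = ∫₀^δ e^{-2θu} du`,
so `K(δ) = (g(δ)² / (2 g₂(δ)), 1)`. The error `K(δ)₀ - δ/2 = (g² - δ g₂) / (2 g₂)` has numerator
`-δ` times the integral of `(e^{-θu} - m)²` over `[0, δ]` (`m` the mean), which lies between
`0` and `θ²δ⁴` since `e^{-θu}` varies by at most `θδ`; and `g₂(δ) ≥ δ e^{-2θ}` for `δ ≤ 1`.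
-/

open Matrix MeasureTheory Real

noncomputable section

/-- Drift matrix `F = [[0, 1], [0, −θ]]` of the integrated Ornstein–Uhlenbeck prior. -/
def Fmat (θ : ℝ) : Matrix (Fin 2) (Fin 2) ℝ := !![0, 1; 0, -θ]

/-- Diffusion column vector `L = (0, η)ᵀ`. -/
def Lmat (η : ℝ) : Matrix (Fin 2) (Fin 1) ℝ := !![0; η]

/-- Noise covariance `Q(δ) = ∫₀^δ exp(sF)·L·Lᵀ·exp(sFᵀ) ds` (entrywise Bochner integral). -/
def Qmat (θ η δ : ℝ) : Matrix (Fin 2) (Fin 2) ℝ :=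
  Matrix.of fun i j => ∫ s in (0:ℝ)..δ,
    (NormedSpace.exp (s • Fmat θ) * (Lmat η * (Lmat η)ᵀ) *
      NormedSpace.exp (s • (Fmat θ)ᵀ)) i j


/-- Observation row vector `H₁ = (0, 1)`. -/
def H1row : Matrix (Fin 1) (Fin 2) ℝ := !![0, 1]

/-- Kalman gain `K(δ) = Q(δ)·H₁ᵀ·(H₁·Q(δ)·H₁ᵀ)⁻¹` with zero measurement noise. -/
def Kgain (θ η δ : ℝ) : Matrix (Fin 2) (Fin 1) ℝ :=
  Qmat θ η δ * H1rowᵀ * (H1row * Qmat θ η δ * H1rowᵀ)⁻¹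

section BanachAlgebra

variable {𝔸 : Type*} [NormedRing 𝔸] [NormedAlgebra ℝ 𝔸] [CompleteSpace 𝔸]

theorem eq_exp_smul_of_hasDerivAt {A : 𝔸} {E : ℝ → 𝔸} (hE : ∀ s, HasDerivAt E (E s * A) s)
    (h0 : E 0 = 1) (s : ℝ) : E s = NormedSpace.exp (s • A) := by
  have hconst : ∀ t, HasDerivAt (fun u => E u * NormedSpace.exp (-u • A)) 0 t := by
    intro t
    have hexp := (hasDerivAt_exp_smul_const' (𝕂 := ℝ) A (-t)).scomp t (hasDerivAt_neg t)
    refine ((hE t).mul hexp).congr_deriv ?_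
    simp [mul_assoc]
  have h := is_const_of_deriv_eq_zero (fun t => (hconst t).differentiableAt)
    (fun t => (hconst t).deriv) s 0
  simp only [neg_zero, zero_smul, NormedSpace.exp_zero, h0, mul_one] at h
  have hinv : NormedSpace.exp (-s • A) * NormedSpace.exp (s • A) = 1 := by
    let _ : NormedAlgebra ℚ 𝔸 := .restrictScalars ℚ ℝ 𝔸
    rw [← NormedSpace.exp_add_of_commute ((Commute.refl A).smul_left _ |>.smul_right _),
      neg_smul, neg_add_cancel, NormedSpace.exp_zero]
  rw [← mul_one (E s), ← hinv, ← mul_assoc, h, one_mul]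

theorem exp_smul_eq_one_add_smul {A : 𝔸} {c : ℝ} (hA : A * A = c • A) {φ : ℝ → ℝ}
    (hφ : ∀ s, HasDerivAt φ (1 + c * φ s) s) (hφ0 : φ 0 = 0) (s : ℝ) :
    NormedSpace.exp (s • A) = 1 + φ s • A := by
  refine (eq_exp_smul_of_hasDerivAt (E := fun s => 1 + φ s • A) (fun t => ?_)
    (by simp [hφ0]) s).symm
  refine ((hφ t).smul_const A).const_add 1 |>.congr_deriv ?_
  rw [add_mul, one_mul, smul_mul_assoc, hA, smul_smul]
  module

end BanachAlgebra

theorem mul_mul_transpose_apply {m : Type*} [Fintype m] (M : Matrix m m ℝ)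
    (v : Matrix m (Fin 1) ℝ) (i j : m) :
    (M * (v * vᵀ) * Mᵀ) i j = (M * v) i 0 * (M * v) j 0 := by
  rw [← Matrix.mul_assoc, Matrix.mul_assoc, ← Matrix.transpose_mul, Matrix.mul_apply,
    Fin.sum_univ_one, Matrix.transpose_apply]

theorem integral_sub_const_sq {f : ℝ → ℝ} (hf : Continuous f) (a b c : ℝ) :
    ∫ x in a..b, (f x - c) ^ 2
      = (∫ x in a..b, f x ^ 2) - 2 * c * (∫ x in a..b, f x) + (b - a) * c ^ 2 := by
  have hexpand : (fun x => (f x - c) ^ 2) = fun x => f x ^ 2 - 2 * c * f x + c ^ 2 := by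
    funext x; ring
  rw [hexpand, intervalIntegral.integral_add, intervalIntegral.integral_sub,
    intervalIntegral.integral_const_mul, intervalIntegral.integral_const, smul_eq_mul]
  all_goals apply Continuous.intervalIntegrable; fun_prop

def intExpNeg (θ s : ℝ) : ℝ := ∫ u in (0:ℝ)..s, Real.exp (-(θ * u))

theorem continuous_exp_neg_mul (θ : ℝ) : Continuous fun u : ℝ => Real.exp (-(θ * u)) := by
  fun_prop

theorem hasDerivAt_intExpNeg (θ s : ℝ) : HasDerivAt (intExpNeg θ) (Real.exp (-(θ * s))) s :=
  ((continuous_exp_neg_mul θ).integral_hasStrictDerivAt 0 s).hasDerivAt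

@[simp]
theorem intExpNeg_zero (θ : ℝ) : intExpNeg θ 0 = 0 :=
  intervalIntegral.integral_same

theorem one_sub_mul_intExpNeg (θ s : ℝ) : 1 - θ * intExpNeg θ s = Real.exp (-(θ * s)) := by
  have hexp : ∀ u, HasDerivAt (fun u => Real.exp (-(θ * u))) (-θ * Real.exp (-(θ * u))) u :=
    fun u => by simpa [mul_comm] using ((hasDerivAt_id u).const_mul θ).neg.exp
  have hftc := intervalIntegral.integral_eq_sub_of_hasDerivAt (fun u _ => hexp u)
    ((continuous_const.mul (continuous_exp_neg_mul θ)).intervalIntegrable 0 s)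
  rw [intervalIntegral.integral_const_mul, mul_zero, neg_zero, Real.exp_zero] at hftc
  rw [intExpNeg]
  linarith

theorem intExpNeg_pos (θ : ℝ) {δ : ℝ} (hδ : 0 < δ) : 0 < intExpNeg θ δ :=
  intervalIntegral.intervalIntegral_pos_of_pos_on
    ((continuous_exp_neg_mul θ).intervalIntegrable 0 δ) (fun _ _ => Real.exp_pos _) hδ

theorem sq_exp_neg_mul (θ u : ℝ) : Real.exp (-(θ * u)) ^ 2 = Real.exp (-(2 * θ * u)) := by
  rw [← Real.exp_nat_mul]; ring_nf

theorem intExpNeg_two_mul (θ δ : ℝ) :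
    intExpNeg (2 * θ) δ = ∫ u in (0:ℝ)..δ, Real.exp (-(θ * u)) ^ 2 := by
  simp_rw [intExpNeg, sq_exp_neg_mul]

section

attribute [local instance] Matrix.linftyOpNormedRing Matrix.linftyOpNormedAlgebra

theorem Fmat_mul_self (θ : ℝ) : Fmat θ * Fmat θ = (-θ) • Fmat θ := by
  ext i j; fin_cases i <;> fin_cases j <;> simp [Fmat, Matrix.mul_apply, Fin.sum_univ_two]

theorem exp_smul_Fmat (θ s : ℝ) : NormedSpace.exp (s • Fmat θ) = 1 + intExpNeg θ s • Fmat θ :=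
  exp_smul_eq_one_add_smul (Fmat_mul_self θ)
    (fun s => (hasDerivAt_intExpNeg θ s).congr_deriv (by rw [← one_sub_mul_intExpNeg]; ring))
    (intExpNeg_zero θ) s

end

theorem exp_smul_Fmat_mul_Lmat (θ η s : ℝ) :
    NormedSpace.exp (s • Fmat θ) * Lmat η = !![η * intExpNeg θ s; η * Real.exp (-(θ * s))] := by
  rw [exp_smul_Fmat, ← one_sub_mul_intExpNeg]
  ext i j; fin_cases i <;> fin_cases j <;>
    simp [Fmat, Lmat, Matrix.mul_apply, Fin.sum_univ_two, Matrix.one_apply] <;> ring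

theorem Qmat_apply (θ η δ : ℝ) (i j : Fin 2) :
    Qmat θ η δ i j = ∫ s in (0:ℝ)..δ, (NormedSpace.exp (s • Fmat θ) * Lmat η) i 0 *
      (NormedSpace.exp (s • Fmat θ) * Lmat η) j 0 := by
  simp_rw [Qmat, Matrix.of_apply, ← Matrix.transpose_smul, Matrix.exp_transpose,
    mul_mul_transpose_apply]

theorem Qmat_one_one (θ η δ : ℝ) : Qmat θ η δ 1 1 = η ^ 2 * intExpNeg (2 * θ) δ := by
  rw [intExpNeg_two_mul, ← intervalIntegral.integral_const_mul, Qmat_apply]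
  simp_rw [exp_smul_Fmat_mul_Lmat]
  simp only [Matrix.of_apply, Matrix.cons_val', Matrix.cons_val_one, Matrix.cons_val_fin_one]
  ring_nf

theorem Qmat_zero_one (θ η δ : ℝ) : Qmat θ η δ 0 1 = η ^ 2 * (intExpNeg θ δ ^ 2 / 2) := by
  have hderiv : ∀ s, HasDerivAt (fun s => η ^ 2 * (intExpNeg θ s ^ 2 / 2))
      ((η * intExpNeg θ s) * (η * Real.exp (-(θ * s)))) s := fun s =>
    (((hasDerivAt_intExpNeg θ s).pow 2).div_const 2 |>.const_mul _).congr_deriv (by ring)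
  have hcont : Continuous fun s => (η * intExpNeg θ s) * (η * Real.exp (-(θ * s))) := by
    have : Continuous (intExpNeg θ) :=
      continuous_iff_continuousAt.2 fun s => (hasDerivAt_intExpNeg θ s).continuousAt
    fun_prop
  simp_rw [Qmat_apply, exp_smul_Fmat_mul_Lmat]
  simpa using intervalIntegral.integral_eq_sub_of_hasDerivAt (fun s _ => hderiv s)
    (hcont.intervalIntegrable 0 δ)

theorem Kgain_apply (θ η δ : ℝ) (i : Fin 2) :
    Kgain θ η δ i 0 = Qmat θ η δ i 1 / Qmat θ η δ 1 1 := by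
  have hscalar : H1row * Qmat θ η δ * H1rowᵀ = !![Qmat θ η δ 1 1] := by
    ext a b; fin_cases a; fin_cases b
    simp [H1row, Matrix.mul_apply, Matrix.vecMul, dotProduct, Fin.sum_univ_two]
  rw [Kgain, hscalar, Matrix.inv_def, Matrix.det_fin_one_of, Matrix.adjugate_fin_one]
  simp [H1row, Matrix.mul_apply, Fin.sum_univ_two, div_eq_mul_inv]

-- Cauchy–Schwarz, from `δ ∫₀^δ (e^{-θu} - m)² = δ g₂ - g²` for the mean `m = g / δ`.
theorem sq_intExpNeg_le (θ : ℝ) {δ : ℝ} (hδ : 0 < δ) :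
    intExpNeg θ δ ^ 2 ≤ δ * intExpNeg (2 * θ) δ := by
  have hvar := integral_sub_const_sq (continuous_exp_neg_mul θ) 0 δ (intExpNeg θ δ / δ)
  have hnonneg : 0 ≤ ∫ u in (0:ℝ)..δ, (Real.exp (-(θ * u)) - intExpNeg θ δ / δ) ^ 2 :=
    intervalIntegral.integral_nonneg hδ.le fun _ _ => sq_nonneg _
  rw [hvar, ← intExpNeg_two_mul, ← intExpNeg] at hnonneg
  field_simp at hnonneg
  nlinarith

-- `δ g₂ - g² = δ ∫₀^δ (e^{-θu} - 1)² - (δ - g)²`, and `0 ≤ 1 - e^{-θu} ≤ θδ` on `[0, δ]`.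
theorem mul_intExpNeg_two_mul_sub_sq_le {θ δ : ℝ} (hθ : 0 ≤ θ) (hδ : 0 ≤ δ) :
    δ * intExpNeg (2 * θ) δ - intExpNeg θ δ ^ 2 ≤ θ ^ 2 * δ ^ 4 := by
  have hpointwise : ∀ u ∈ Set.Icc 0 δ, (Real.exp (-(θ * u)) - 1) ^ 2 ≤ (θ * δ) ^ 2 := by
    intro u ⟨hu0, huδ⟩
    have hle_one : Real.exp (-(θ * u)) ≤ 1 := Real.exp_le_one_iff.2 (by nlinarith)
    have hge := Real.add_one_le_exp (-(θ * u))
    rw [← neg_sub, neg_sq]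
    exact pow_le_pow_left₀ (by linarith) (by nlinarith) 2
  have hmono : ∫ u in (0:ℝ)..δ, (Real.exp (-(θ * u)) - 1) ^ 2 ≤ ∫ _ in (0:ℝ)..δ, (θ * δ) ^ 2 :=
    intervalIntegral.integral_mono_on hδ
      (((continuous_exp_neg_mul θ).sub continuous_const).pow 2 |>.intervalIntegrable 0 δ)
      intervalIntegrable_const hpointwise
  rw [integral_sub_const_sq (continuous_exp_neg_mul θ), ← intExpNeg_two_mul, ← intExpNeg,
    intervalIntegral.integral_const, smul_eq_mul] at hmono
  nlinarith [sq_nonneg (δ - intExpNeg θ δ)]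

theorem mul_exp_neg_le_intExpNeg {θ δ : ℝ} (hθ : 0 ≤ θ) (hδ : 0 ≤ δ) (hδ1 : δ ≤ 1) :
    δ * Real.exp (-θ) ≤ intExpNeg θ δ := by
  have hmono : ∫ _ in (0:ℝ)..δ, Real.exp (-θ) ≤ intExpNeg θ δ :=
    intervalIntegral.integral_mono_on hδ intervalIntegrable_const
      ((continuous_exp_neg_mul θ).intervalIntegrable 0 δ)
      fun u hu => Real.exp_le_exp.2 (by nlinarith [hu.1, hu.2])
  simpa using hmono

theorem abs_sq_intExpNeg_div_sub_le {θ δ : ℝ} (hθ : 0 ≤ θ) (hδ : 0 < δ) (hδ1 : δ ≤ 1) :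
    |intExpNeg θ δ ^ 2 / (2 * intExpNeg (2 * θ) δ) - δ / 2|
      ≤ θ ^ 2 * Real.exp (2 * θ) / 2 * δ ^ 3 := by
  have hden : δ * Real.exp (-(2 * θ)) ≤ intExpNeg (2 * θ) δ :=
    mul_exp_neg_le_intExpNeg (by positivity) hδ.le hδ1
  have hnum : |intExpNeg θ δ ^ 2 - δ * intExpNeg (2 * θ) δ| ≤ θ ^ 2 * δ ^ 4 :=
    abs_le.2 ⟨by linarith [mul_intExpNeg_two_mul_sub_sq_le hθ hδ.le],
      by linarith [sq_intExpNeg_le θ hδ, mul_nonneg (sq_nonneg θ) (pow_pos hδ 4).le]⟩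
  have hg₂ := intExpNeg_pos (2 * θ) hδ
  have hpos : 0 < 2 * intExpNeg (2 * θ) δ := by positivity
  calc |intExpNeg θ δ ^ 2 / (2 * intExpNeg (2 * θ) δ) - δ / 2|
      = |intExpNeg θ δ ^ 2 - δ * intExpNeg (2 * θ) δ| / (2 * intExpNeg (2 * θ) δ) := by
        rw [← abs_of_pos hpos, ← abs_div, abs_of_pos hpos]
        congr 1
        field_simp
    _ ≤ θ ^ 2 * δ ^ 4 / (2 * (δ * Real.exp (-(2 * θ)))) :=
        div_le_div₀ (by positivity) hnum (by positivity) (by linarith)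
    _ = θ ^ 2 * Real.exp (2 * θ) / 2 * δ ^ 3 := by
        rw [Real.exp_neg]
        field_simp

/-- The Kalman gain of the one-step EKF0 with IOUP prior has second component exactly `1`,
and first component `δ/2 + O(δ³)` with a constant depending only on `θ`. -/
theorem ekf0_kalman_gain (θ : ℝ) (hθ : 0 ≤ θ) :
    (∀ η : ℝ, 0 < η → ∀ δ : ℝ, 0 < δ → Kgain θ η δ 1 0 = 1) ∧
    ∃ C : ℝ, 0 < C ∧ ∀ η : ℝ, 0 < η → ∀ δ : ℝ, 0 < δ → δ ≤ 1 →
      |Kgain θ η δ 0 0 - δ / 2| ≤ C * δ ^ 3 := by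
  constructor
  · intro η hη δ hδ
    have hQ : 0 < Qmat θ η δ 1 1 := by
      rw [Qmat_one_one]; exact mul_pos (by positivity) (intExpNeg_pos _ hδ)
    rw [Kgain_apply, div_self hQ.ne']
  · refine ⟨(1 + θ ^ 2) * Real.exp (2 * θ) / 2, by positivity, fun η hη δ hδ hδ1 => ?_⟩
    have hK : Kgain θ η δ 0 0 = intExpNeg θ δ ^ 2 / (2 * intExpNeg (2 * θ) δ) := by
      rw [Kgain_apply, Qmat_zero_one, Qmat_one_one]
      field_simp
    rw [hK]
    refine (abs_sq_intExpNeg_div_sub_le hθ hδ hδ1).trans ?_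
    gcongr
    linarith
end
end

section
/- Consider the affine Kalman filter recursion in dimension D with zero initial covariance and zero measurement noise: m⁻_k = A·m_{k−1}, P⁻_k = A·P_{k−1}·Aᵀ + Q, S_k = H̃·P⁻_k·H̃ᵀ, K_k = P⁻_k·H̃ᵀ·S_k⁻¹, m_k = m⁻_k − K_k·((H̃ − G_k)·m⁻_k − g_k), P_k = (I − K_k·H̃)·P⁻_k, started from a given m₀ ∈ ℝ^D and P₀ = 0, and assume S_k > 0 for all k = 1, …, N. For η > 0, let (m'_k, P'_k) be defined by the same recursion with Q replaced by η²·Q, starting from m'₀ = m₀ and P'₀ = 0. Then for all 0 ≤ k ≤ N: m'_k = m_k and P'_k = η²·P_k. -/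
/-!
Multiplying `Q` by `c = η²` multiplies the predicted covariance `A P Aᵀ + Q` by `c` as soon as
`P` was multiplied by `c`, and the gain `P⁻ Hᵀ (H P⁻ Hᵀ)⁻¹` is invariant under `P⁻ ↦ c P⁻`.
Hence, by induction on `k`, the means coincide and the covariances `P_k = (I - K H) P⁻_k` scale
by `c`.
-/

open Matrix

noncomputable section

variable {K : Type*} [Field K] {m n : Type*} [Fintype m] [DecidableEq m] [Fintype n]

/-- Unlike `Matrix.inv_smul'`, no invertibility is needed: if `S` is singular, both sides are `0`. -/
theorem Matrix.smul_inv₀ (c : K) (S : Matrix m m K) : (c • S)⁻¹ = c⁻¹ • S⁻¹ := by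
  rcases eq_or_ne c 0 with rfl | hc
  · simp
  by_cases hS : IsUnit S.det
  · exact inv_eq_left_inv (by simp [smul_smul, hc, nonsing_inv_mul _ hS])
  · have hcS : ¬IsUnit (c • S).det := by
      simpa [det_smul, hc] using hS
    rw [nonsing_inv_apply_not_isUnit _ hS, nonsing_inv_apply_not_isUnit _ hcS, smul_zero]

def kalmanGain (P : Matrix n n K) (H : Matrix m n K) : Matrix n m K :=
  P * Hᵀ * (H * P * Hᵀ)⁻¹

theorem kalmanGain_smul {c : K} (hc : c ≠ 0) (P : Matrix n n K) (H : Matrix m n K) :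
    kalmanGain (c • P) H = kalmanGain P H := by
  simp only [kalmanGain, Matrix.smul_mul, Matrix.mul_smul, Matrix.smul_inv₀, smul_smul,
    inv_mul_cancel₀ hc, one_smul]

theorem kalman_filter_diffusion_scaling_general (D N : ℕ) (η : ℝ) (hη : 0 < η)
    (A Q : Matrix (Fin D) (Fin D) ℝ)
    (Htil : Matrix (Fin 1) (Fin D) ℝ)
    (G : ℕ → Matrix (Fin 1) (Fin D) ℝ) (g : ℕ → ℝ)
    (m₀ : Matrix (Fin D) (Fin 1) ℝ)
    (m m' : ℕ → Matrix (Fin D) (Fin 1) ℝ) (Pf Pf' : ℕ → Matrix (Fin D) (Fin D) ℝ)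
    (hm0 : m 0 = m₀) (hP0 : Pf 0 = 0) (hm0' : m' 0 = m₀) (hP0' : Pf' 0 = 0)
    -- Kalman recursion with noise covariance Q
    (hrec : ∀ k < N,
      m (k + 1) = A * m k -
        (A * Pf k * Aᵀ + Q) * Htilᵀ * (Htil * (A * Pf k * Aᵀ + Q) * Htilᵀ)⁻¹ *
          ((Htil - G (k + 1)) * (A * m k) - g (k + 1) • (1 : Matrix (Fin 1) (Fin 1) ℝ)) ∧
      Pf (k + 1) = ((1 : Matrix (Fin D) (Fin D) ℝ) -
        (A * Pf k * Aᵀ + Q) * Htilᵀ * (Htil * (A * Pf k * Aᵀ + Q) * Htilᵀ)⁻¹ * Htil) *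
        (A * Pf k * Aᵀ + Q))
    -- Kalman recursion with noise covariance η²·Q
    (hrec' : ∀ k < N,
      m' (k + 1) = A * m' k -
        (A * Pf' k * Aᵀ + η ^ 2 • Q) * Htilᵀ *
          (Htil * (A * Pf' k * Aᵀ + η ^ 2 • Q) * Htilᵀ)⁻¹ *
          ((Htil - G (k + 1)) * (A * m' k) - g (k + 1) • (1 : Matrix (Fin 1) (Fin 1) ℝ)) ∧
      Pf' (k + 1) = ((1 : Matrix (Fin D) (Fin D) ℝ) -
        (A * Pf' k * Aᵀ + η ^ 2 • Q) * Htilᵀ *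
          (Htil * (A * Pf' k * Aᵀ + η ^ 2 • Q) * Htilᵀ)⁻¹ * Htil) *
        (A * Pf' k * Aᵀ + η ^ 2 • Q)) :
    ∀ k ≤ N, m' k = m k ∧ Pf' k = η ^ 2 • Pf k := by
  intro k hk
  induction k with
  | zero => simp [hm0, hm0', hP0, hP0']
  | succ k ih =>
    obtain ⟨hmk, hPk⟩ := ih (by omega)
    obtain ⟨hm, hP⟩ := hrec k (by omega)
    obtain ⟨hm', hP'⟩ := hrec' k (by omega)
    have hpred : A * Pf' k * Aᵀ + η ^ 2 • Q = η ^ 2 • (A * Pf k * Aᵀ + Q) := by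
      rw [hPk, Matrix.mul_smul, Matrix.smul_mul, smul_add]
    have hgain := kalmanGain_smul (pow_ne_zero 2 hη.ne') (A * Pf k * Aᵀ + Q) Htil
    unfold kalmanGain at hgain
    rw [hm', hP', hpred, hgain, hm, hP, hmk, Matrix.mul_smul]
    exact ⟨rfl, rfl⟩

/-- Scaling property of the affine Kalman filter recursion underlying the quasi
maximum-likelihood calibration: replacing the noise covariance `Q` by `η²·Q` (zero initial
covariance, zero measurement noise) leaves all posterior means unchanged and scales all
posterior covariances by `η²`. -/
theorem kalman_filter_diffusion_scaling (D N : ℕ) (η : ℝ) (hη : 0 < η)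
    (A Q : Matrix (Fin D) (Fin D) ℝ) (hQ : Q.PosSemidef)
    (Htil : Matrix (Fin 1) (Fin D) ℝ)
    (G : ℕ → Matrix (Fin 1) (Fin D) ℝ) (g : ℕ → ℝ)
    (m₀ : Matrix (Fin D) (Fin 1) ℝ)
    (m m' : ℕ → Matrix (Fin D) (Fin 1) ℝ) (Pf Pf' : ℕ → Matrix (Fin D) (Fin D) ℝ)
    (hm0 : m 0 = m₀) (hP0 : Pf 0 = 0) (hm0' : m' 0 = m₀) (hP0' : Pf' 0 = 0)
    -- the predicted residual variances S_k, k = 1, …, N, are positive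
    (hS : ∀ k < N, 0 < (Htil * (A * Pf k * Aᵀ + Q) * Htilᵀ) 0 0)
    -- Kalman recursion with noise covariance Q
    (hrec : ∀ k < N,
      m (k + 1) = A * m k -
        (A * Pf k * Aᵀ + Q) * Htilᵀ * (Htil * (A * Pf k * Aᵀ + Q) * Htilᵀ)⁻¹ *
          ((Htil - G (k + 1)) * (A * m k) - g (k + 1) • (1 : Matrix (Fin 1) (Fin 1) ℝ)) ∧
      Pf (k + 1) = ((1 : Matrix (Fin D) (Fin D) ℝ) -
        (A * Pf k * Aᵀ + Q) * Htilᵀ * (Htil * (A * Pf k * Aᵀ + Q) * Htilᵀ)⁻¹ * Htil) *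
        (A * Pf k * Aᵀ + Q))
    -- Kalman recursion with noise covariance η²·Q
    (hrec' : ∀ k < N,
      m' (k + 1) = A * m' k -
        (A * Pf' k * Aᵀ + η ^ 2 • Q) * Htilᵀ *
          (Htil * (A * Pf' k * Aᵀ + η ^ 2 • Q) * Htilᵀ)⁻¹ *
          ((Htil - G (k + 1)) * (A * m' k) - g (k + 1) • (1 : Matrix (Fin 1) (Fin 1) ℝ)) ∧
      Pf' (k + 1) = ((1 : Matrix (Fin D) (Fin D) ℝ) -
        (A * Pf' k * Aᵀ + η ^ 2 • Q) * Htilᵀ *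
          (Htil * (A * Pf' k * Aᵀ + η ^ 2 • Q) * Htilᵀ)⁻¹ * Htil) *
        (A * Pf' k * Aᵀ + η ^ 2 • Q)) :
    ∀ k ≤ N, m' k = m k ∧ Pf' k = η ^ 2 • Pf k :=
  kalman_filter_diffusion_scaling_general D N η hη A Q Htil G g m₀ m m' Pf Pf' hm0 hP0 hm0' hP0'
    hrec hrec'
end
end
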